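/- Let A be the operator diag(a, b) ⊕ 0 on a complex Hilbert space H with a > 0 > b, and c = (c_1,...,c_k) with c_1 ≥ ... ≥ c_k, k ≤ dim H. With c̄_1 = c_1 (resp. max{c_1,0}) and c̃_k = c_k (resp. min{c_k,0}) when dim H = k (resp. dim H > k), the c-numerical range W_c(A) equals the closed real interval [c̃_k a + c̄_1 b, c̄_1 a + c̃_k b]. -/

import Mathlib

open scoped Pointwise

noncomputable def cNumRange {H : Type*} [NormedAddCommGroup H] [InnerProductSpace ℂ H]
    (k : ℕ) (c : Fin k → ℝ) (A : H →L[ℂ] H) : Set ℂ :=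
  { z | ∃ e : Fin k → H, Orthonormal ℂ e ∧
      z = ∑ j, (c j : ℂ) * (inner ℂ (e j) (A (e j)) : ℂ) }

/-- \`c̄_j\`: equals \`c j\` when the dimension \`d\` equals \`k\`, and \`max (c j) 0\` otherwise. -/
noncomputable def cbar (d : Cardinal) (k : ℕ) (c : Fin k → ℝ) (j : Fin k) : ℝ :=
  if d = (k : Cardinal) then c j else max (c j) 0

/-- \`c̃_j\`: equals \`c j\` when the dimension \`d\` equals \`k\`, and \`min (c j) 0\` otherwise. -/
noncomputable def ctil (d : Cardinal) (k : ℕ) (c : Fin k → ℝ) (j : Fin k) : ℝ :=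
  if d = (k : Cardinal) then c j else min (c j) 0


local notation "⟪" x ", " y "⟫" => @inner ℂ _ _ x y

theorem inner_mul_inner_self' {H : Type*} [NormedAddCommGroup H] [InnerProductSpace ℂ H]
    (x y : H) : ⟪x, y⟫ * ⟪y, x⟫ = ((‖⟪x, y⟫‖ ^ 2 : ℝ) : ℂ) := by
  rw [← inner_conj_symm y x, Complex.mul_conj, Complex.normSq_eq_norm_sq]

theorem orthonormal_snoc' {H : Type*} [NormedAddCommGroup H] [InnerProductSpace ℂ H]
    {n : ℕ} {v : Fin n → H} (hv : Orthonormal ℂ v) {x : H}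
    (hx : ⟪x, x⟫ = 1) (hxv : ∀ i, ⟪v i, x⟫ = 0) : Orthonormal ℂ (Fin.snoc v x) := by
  rw [orthonormal_iff_ite] at hv ⊢
  intro i j
  induction i using Fin.lastCases with
  | last =>
    induction j using Fin.lastCases with
    | last => simpa using hx
    | cast j =>
      have : ⟪x, v j⟫ = 0 := inner_eq_zero_symm.mp (hxv j)
      simp [Fin.snoc_castSucc, (Fin.castSucc_lt_last j).ne', this]
  | cast i =>
    induction j using Fin.lastCases with
    | last => simp [Fin.snoc_castSucc, (Fin.castSucc_lt_last i).ne, hxv i]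
    | cast j => simpa [Fin.snoc_castSucc, Fin.castSucc_inj] using hv i j

theorem orthonormal_cons' {H : Type*} [NormedAddCommGroup H] [InnerProductSpace ℂ H]
    {n : ℕ} {v : Fin n → H} (hv : Orthonormal ℂ v) {x : H}
    (hx : ⟪x, x⟫ = 1) (hxv : ∀ i, ⟪x, v i⟫ = 0) : Orthonormal ℂ (Fin.cons x v) := by
  rw [orthonormal_iff_ite] at hv ⊢
  intro i j
  induction i using Fin.cases with
  | zero =>
    induction j using Fin.cases with
    | zero => simpa using hx
    | succ j => simp [(Fin.succ_ne_zero j).symm, hxv j]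
  | succ i =>
    induction j using Fin.cases with
    | zero => simp [Fin.succ_ne_zero i, inner_eq_zero_symm.mp (hxv i)]
    | succ j => simpa [Fin.succ_inj] using hv i j

theorem exists_unit_orthogonal {H : Type*} [NormedAddCommGroup H] [InnerProductSpace ℂ H]
    {n : ℕ} (v : Fin n → H) (hn : (n : Cardinal) < Module.rank ℂ H) :
    ∃ x : H, ⟪x, x⟫ = 1 ∧ ∀ i, ⟪v i, x⟫ = 0 := by
  set K := Submodule.span ℂ (Set.range v) with hKdef
  haveI hK : FiniteDimensional ℂ K := FiniteDimensional.span_of_finite ℂ (Set.finite_range v)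
  have hKne : K ≠ ⊤ := by
    intro h
    have h1 : Module.rank ℂ K ≤ n := by
      have h2 : (Module.finrank ℂ ↥K : Cardinal) = Module.rank ℂ ↥K :=
        Module.finrank_eq_rank (R := ℂ) (M := ↥K)
      rw [← h2]
      have := finrank_range_le_card (R := ℂ) v
      exact_mod_cast (by simpa [Set.finrank] using this : Module.finrank ℂ ↥K ≤ n)
    rw [h, rank_top] at h1
    exact absurd hn (not_lt.mpr h1)
  obtain ⟨x, hx⟩ : ∃ x, x ∉ K := by
    by_contra h
    push_neg at h
    exact hKne (Submodule.eq_top_iff'.mpr h)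
  set y := x - ((K.orthogonalProjectionOnto x) : H) with hy
  have hyK : y ∈ Kᗮ := Submodule.sub_starProjection_mem_orthogonal x
  have hy0 : y ≠ 0 := by
    intro h
    apply hx
    rw [sub_eq_zero] at h
    rw [h]; exact (K.orthogonalProjectionOnto x).2
  have hny : ‖y‖ ≠ 0 := norm_ne_zero_iff.mpr hy0
  refine ⟨((‖y‖ : ℂ))⁻¹ • y, ?_, ?_⟩
  · rw [inner_smul_left, inner_smul_right, inner_self_eq_norm_sq_to_K]
    rw [map_inv₀, Complex.conj_ofReal]
    have : (‖y‖ : ℂ) ≠ 0 := by exact_mod_cast hny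
    field_simp
    rfl
  · intro i
    rw [inner_smul_right]
    have : ⟪v i, y⟫ = 0 := by
      have := (Submodule.mem_orthogonal K y).mp hyK
      exact this (v i) (Submodule.subset_span (Set.mem_range_self i))
    rw [this, mul_zero]

theorem ext' {H : Type*} [NormedAddCommGroup H] [InnerProductSpace ℂ H] :
    ∀ (n : ℕ), ((n : Cardinal) ≤ Module.rank ℂ H) →
    ∀ (m : ℕ) (v : Fin m → H), Orthonormal ℂ v → m ≤ n →
    ∃ w : Fin n → H, Orthonormal ℂ w ∧
      ∀ (i : ℕ) (him : i < m) (hin : i < n), w ⟨i, hin⟩ = v ⟨i, him⟩ := by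
  intro n
  induction n with
  | zero =>
    intro _ m v hv hm
    refine ⟨Fin.elim0, ?_, ?_⟩
    · rw [orthonormal_iff_ite]; exact fun i => i.elim0
    · intro i _ hin; omega
  | succ n ih =>
    intro hn m v hv hm
    rcases eq_or_lt_of_le hm with heq | hlt
    · subst heq
      exact ⟨v, hv, fun i him hin => rfl⟩
    · have hm' : m ≤ n := by omega
      have hle : ((n : ℕ) : Cardinal) ≤ ((n + 1 : ℕ) : Cardinal) := by
        exact_mod_cast Nat.cast_le.mpr (Nat.le_succ n)
      obtain ⟨w, hw, hwv⟩ := ih (le_trans hle hn) m v hv hm'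
      have hnlt : (n : Cardinal) < Module.rank ℂ H :=
        lt_of_lt_of_le (by exact_mod_cast Nat.lt_succ_self n) hn
      obtain ⟨x, hx1, hx0⟩ := exists_unit_orthogonal w hnlt
      refine ⟨Fin.snoc w x, orthonormal_snoc' hw hx1 hx0, ?_⟩
      intro i him hin
      have hin' : i < n := lt_of_lt_of_le him hm'
      have h2 : (⟨i, hin⟩ : Fin (n+1)) = Fin.castSucc ⟨i, hin'⟩ := rfl
      rw [h2, Fin.snoc_castSucc, hwv i him hin']

noncomputable def rset {H : Type*} [NormedAddCommGroup H] [InnerProductSpace ℂ H]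
    (k : ℕ) (c : Fin k → ℝ) (a b : ℝ) (e₁ e₂ : H) : Set ℝ :=
  { r | ∃ e : Fin k → H, Orthonormal ℂ e ∧
      r = ∑ j, c j * (a * ‖⟪e₁, e j⟫‖ ^ 2 + b * ‖⟪e₂, e j⟫‖ ^ 2) }

theorem pair_mem {H : Type*} [NormedAddCommGroup H] [InnerProductSpace ℂ H]
    {k : ℕ} (hk2 : 2 ≤ k) (c : Fin k → ℝ) (a b : ℝ) (e₁ e₂ : H)
    (v : Fin (k - 2) → H) (hv : Orthonormal ℂ v)
    (hv1 : ∀ i, ⟪e₁, v i⟫ = 0) (hv2 : ∀ i, ⟪e₂, v i⟫ = 0)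
    (f g : H) (hff : ⟪f, f⟫ = 1) (hgg : ⟪g, g⟫ = 1) (hfg : ⟪f, g⟫ = 0)
    (hfv : ∀ i, ⟪f, v i⟫ = 0) (hgv : ∀ i, ⟪g, v i⟫ = 0) :
    c ⟨0, Nat.zero_lt_of_lt hk2⟩ * (a * ‖⟪e₁, f⟫‖ ^ 2 + b * ‖⟪e₂, f⟫‖ ^ 2) +
      c ⟨k - 1, Nat.sub_lt (Nat.zero_lt_of_lt hk2) Nat.one_pos⟩ * (a * ‖⟪e₁, g⟫‖ ^ 2 + b * ‖⟪e₂, g⟫‖ ^ 2) ∈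
        rset k c a b e₁ e₂ := by
  classical
  have hkk : k = (k - 2) + 1 + 1 := by omega
  set w : Fin ((k - 2) + 1 + 1) → H := Fin.cons f (Fin.snoc v g) with hw
  have hworth : Orthonormal ℂ w := by
    refine orthonormal_cons' (orthonormal_snoc' hv hgg ?_) hff ?_
    · exact fun i => inner_eq_zero_symm.mp (hgv i)
    · intro i
      induction i using Fin.lastCases with
      | last => simpa using hfg
      | cast i => simpa [Fin.snoc_castSucc] using hfv i
  set e : Fin k → H := w ∘ Fin.cast hkk with he
  refine ⟨e, hworth.comp _ (fun i j => by simp [Fin.ext_iff]), ?_⟩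
  have hre : ∑ j : Fin k, c j * (a * ‖⟪e₁, e j⟫‖ ^ 2 + b * ‖⟪e₂, e j⟫‖ ^ 2) =
      ∑ i : Fin ((k - 2) + 1 + 1),
        c ((finCongr hkk).symm i) * (a * ‖⟪e₁, w i⟫‖ ^ 2 + b * ‖⟪e₂, w i⟫‖ ^ 2) := by
    refine Fintype.sum_equiv (finCongr hkk) _ _ ?_
    intro j
    simp [he]
  rw [hre, Fin.sum_univ_succ]
  have hmid : ∀ i : Fin ((k - 2) + 1), c ((finCongr hkk).symm i.succ) *
      (a * ‖⟪e₁, w i.succ⟫‖ ^ 2 + b * ‖⟪e₂, w i.succ⟫‖ ^ 2) =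
      (if h : (i : ℕ) < k - 2 then 0 else
        c ⟨k - 1, by omega⟩ * (a * ‖⟪e₁, g⟫‖ ^ 2 + b * ‖⟪e₂, g⟫‖ ^ 2)) := by
    intro i
    induction i using Fin.lastCases with
    | last =>
      rw [dif_neg (by simp)]
      have h1 : w (Fin.last (k - 2)).succ = g := by
        rw [hw, Fin.cons_succ, Fin.snoc_last]
      have h2 : ((finCongr hkk).symm (Fin.last (k - 2)).succ) = ⟨k - 1, by omega⟩ := by
        apply Fin.ext; simp; omega
      rw [h1, h2]
    | cast i =>
      rw [dif_pos (by simpa using i.isLt)]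
      have h1 : w (Fin.castSucc i).succ = v i := by
        rw [hw, Fin.cons_succ, Fin.snoc_castSucc]
      rw [h1, hv1 i, hv2 i]
      simp
  rw [Fin.sum_univ_castSucc]
  have hz : ∀ i : Fin (k - 2), c ((finCongr hkk).symm (Fin.castSucc i).succ) *
      (a * ‖⟪e₁, w (Fin.castSucc i).succ⟫‖ ^ 2 + b * ‖⟪e₂, w (Fin.castSucc i).succ⟫‖ ^ 2) = 0 := by
    intro i
    rw [hmid (Fin.castSucc i), dif_pos (by simpa using i.isLt)]
  rw [Finset.sum_congr rfl (fun i _ => hz i), Finset.sum_const, smul_zero]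
  rw [hmid (Fin.last (k - 2)), dif_neg (by simp)]
  have h0 : w 0 = f := rfl
  have h00 : ((finCongr hkk).symm 0) = (⟨0, by omega⟩ : Fin k) := by apply Fin.ext; simp
  rw [h0, h00]
  ring

theorem inner_apply_A {H : Type*} [NormedAddCommGroup H] [InnerProductSpace ℂ H]
    (a b : ℝ) (e₁ e₂ : H) (x : H) :
    (inner ℂ x (((a : ℂ) • ((innerSL ℂ e₁).smulRight e₁) +
        (b : ℂ) • ((innerSL ℂ e₂).smulRight e₂)) x) : ℂ) =
      ((a * ‖⟪e₁, x⟫‖ ^ 2 + b * ‖⟪e₂, x⟫‖ ^ 2 : ℝ) : ℂ) := by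
  simp only [ContinuousLinearMap.add_apply, ContinuousLinearMap.coe_smul', Pi.smul_apply,
    ContinuousLinearMap.smulRight_apply, innerSL_apply_apply, inner_add_right, inner_smul_right,
    smul_eq_mul, mul_assoc, inner_mul_inner_self']
  push_cast
  ring

theorem cNumRange_eq_image {H : Type*} [NormedAddCommGroup H] [InnerProductSpace ℂ H]
    (k : ℕ) (c : Fin k → ℝ) (a b : ℝ) (e₁ e₂ : H) :
    cNumRange k c ((a : ℂ) • ((innerSL ℂ e₁).smulRight e₁) +
        (b : ℂ) • ((innerSL ℂ e₂).smulRight e₂)) =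
      Complex.ofReal '' rset k c a b e₁ e₂ := by
  have key : ∀ e : Fin k → H,
      (∑ j, (c j : ℂ) * (inner ℂ (e j) (((a : ℂ) • ((innerSL ℂ e₁).smulRight e₁) +
          (b : ℂ) • ((innerSL ℂ e₂).smulRight e₂)) (e j)) : ℂ)) =
        ((∑ j, c j * (a * ‖⟪e₁, e j⟫‖ ^ 2 + b * ‖⟪e₂, e j⟫‖ ^ 2) : ℝ) : ℂ) := by
    intro e
    rw [Finset.sum_congr rfl (fun j (_ : j ∈ Finset.univ) => by
      rw [inner_apply_A a b e₁ e₂ (e j)] :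
        ∀ j ∈ Finset.univ, (c j : ℂ) * _ = (c j : ℂ) * ((a * ‖⟪e₁, e j⟫‖ ^ 2 + b * ‖⟪e₂, e j⟫‖ ^ 2 : ℝ) : ℂ))]
    push_cast
    ring
  ext z
  constructor
  · rintro ⟨e, he, rfl⟩
    exact ⟨∑ j, c j * (a * ‖⟪e₁, e j⟫‖ ^ 2 + b * ‖⟪e₂, e j⟫‖ ^ 2), ⟨e, he, rfl⟩, (key e).symm⟩
  · rintro ⟨r, ⟨e, he, rfl⟩, rfl⟩
    exact ⟨e, he, (key e).symm⟩

theorem sum_le_cbar' {k : ℕ} (hk0 : 0 < k) (c s : Fin k → ℝ) (hc : Antitone c)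
    (hs : ∀ j, 0 ≤ s j) (h1 : ∑ j, s j ≤ 1) (d : Cardinal)
    (hd : d = (k : Cardinal) → ∑ j, s j = 1) :
    ∑ j, c j * s j ≤ (if d = (k : Cardinal) then c ⟨0, hk0⟩ else max (c ⟨0, hk0⟩) 0) := by
  split_ifs with h
  · calc ∑ j, c j * s j ≤ ∑ j, c ⟨0, hk0⟩ * s j :=
          Finset.sum_le_sum fun j _ =>
            mul_le_mul_of_nonneg_right (hc (by simp [Fin.le_def])) (hs j)
    _ = c ⟨0, hk0⟩ * ∑ j, s j := by rw [Finset.mul_sum]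
    _ = c ⟨0, hk0⟩ := by rw [hd h, mul_one]
  · calc ∑ j, c j * s j ≤ ∑ j, max (c ⟨0, hk0⟩) 0 * s j :=
          Finset.sum_le_sum fun j _ =>
            mul_le_mul_of_nonneg_right (le_trans (hc (by simp [Fin.le_def])) (le_max_left _ _)) (hs j)
    _ = max (c ⟨0, hk0⟩) 0 * ∑ j, s j := by rw [Finset.mul_sum]
    _ ≤ max (c ⟨0, hk0⟩) 0 * 1 := mul_le_mul_of_nonneg_left h1 (le_max_right _ _)
    _ = _ := mul_one _

theorem ctil_le_sum' {k : ℕ} (hk0 : 0 < k) (c s : Fin k → ℝ) (hc : Antitone c)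
    (hs : ∀ j, 0 ≤ s j) (h1 : ∑ j, s j ≤ 1) (d : Cardinal)
    (hd : d = (k : Cardinal) → ∑ j, s j = 1) :
    (if d = (k : Cardinal) then c ⟨k - 1, by omega⟩ else min (c ⟨k - 1, by omega⟩) 0) ≤
      ∑ j, c j * s j := by
  split_ifs with h
  · calc c ⟨k - 1, by omega⟩ = c ⟨k - 1, by omega⟩ * ∑ j, s j := by rw [hd h, mul_one]
    _ = ∑ j, c ⟨k - 1, by omega⟩ * s j := by rw [Finset.mul_sum]
    _ ≤ ∑ j, c j * s j :=
          Finset.sum_le_sum fun j _ =>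
            mul_le_mul_of_nonneg_right (hc (by simp [Fin.le_def]; omega)) (hs j)
  · calc min (c ⟨k - 1, by omega⟩) 0 = min (c ⟨k - 1, by omega⟩) 0 * 1 := (mul_one _).symm
    _ ≤ min (c ⟨k - 1, by omega⟩) 0 * ∑ j, s j := by
          rcases le_or_gt (∑ j, s j) 1 with h' | h'
          · exact mul_le_mul_of_nonpos_left h1 (min_le_right _ _)
          · exact absurd h' (not_lt.mpr h1)
    _ = ∑ j, min (c ⟨k - 1, by omega⟩) 0 * s j := by rw [Finset.mul_sum]
    _ ≤ ∑ j, c j * s j :=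
          Finset.sum_le_sum fun j _ =>
            mul_le_mul_of_nonneg_right
              (le_trans (min_le_left _ _) (hc (by simp [Fin.le_def]; omega))) (hs j)

theorem bessel' {H : Type*} [NormedAddCommGroup H] [InnerProductSpace ℂ H]
    {k : ℕ} {e : Fin k → H} (he : Orthonormal ℂ e) (x : H) :
    ∑ j, ‖⟪x, e j⟫‖ ^ 2 ≤ ‖x‖ ^ 2 := by
  have h := he.sum_inner_products_le (s := Finset.univ) (x := x)
  refine le_trans (le_of_eq ?_) h
  exact Finset.sum_congr rfl fun j _ => by rw [norm_inner_symm]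

theorem parseval' {H : Type*} [NormedAddCommGroup H] [InnerProductSpace ℂ H]
    {k : ℕ} (hk0 : 0 < k) (hrank : Module.rank ℂ H = k)
    {e : Fin k → H} (he : Orthonormal ℂ e) (x : H) :
    ∑ j, ‖⟪x, e j⟫‖ ^ 2 = ‖x‖ ^ 2 := by
  haveI : FiniteDimensional ℂ H := Module.finite_of_rank_eq_nat hrank
  have hfr : Module.finrank ℂ H = k := Module.finrank_eq_of_rank_eq hrank
  haveI : Nonempty (Fin k) := ⟨⟨0, hk0⟩⟩
  have hli := he.linearIndependent
  have hcard : Fintype.card (Fin k) = Module.finrank ℂ H := by simp [hfr]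
  set bb := basisOfLinearIndependentOfCardEqFinrank hli hcard with hbb
  have hcoe : ⇑bb = e := coe_basisOfLinearIndependentOfCardEqFinrank hli hcard
  set ob := bb.toOrthonormalBasis (by rwa [hcoe]) with hob
  have hobe : ∀ i, ob i = e i := fun i => by
    rw [hob, Module.Basis.coe_toOrthonormalBasis, hcoe]
  have h := ob.sum_inner_mul_inner x x
  rw [Finset.sum_congr rfl (fun j (_ : j ∈ Finset.univ) => by
        rw [hobe j, inner_mul_inner_self' x (e j)] :
      ∀ j ∈ Finset.univ, ⟪x, ob j⟫ * ⟪ob j, x⟫ = ((‖⟪x, e j⟫‖ ^ 2 : ℝ) : ℂ)),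
    inner_self_eq_norm_sq_to_K] at h
  have h2 : ((∑ j, ‖⟪x, e j⟫‖ ^ 2 : ℝ) : ℂ) = ((‖x‖ ^ 2 : ℝ) : ℂ) := by
    push_cast
    push_cast at h
    exact h
  exact Complex.ofReal_injective h2

theorem norm_ofReal_sq (r : ℝ) : ‖((r : ℝ) : ℂ)‖ ^ 2 = r ^ 2 := by
  rw [Complex.norm_real, Real.norm_eq_abs, sq_abs]

theorem rot_mem {H : Type*} [NormedAddCommGroup H] [InnerProductSpace ℂ H]
    {k : ℕ} (hk2 : 2 ≤ k) (c : Fin k → ℝ) (a b : ℝ) (e₁ e₂ : H)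
    (v : Fin (k - 2) → H) (hv : Orthonormal ℂ v)
    (hv1 : ∀ i, ⟪e₁, v i⟫ = 0) (hv2 : ∀ i, ⟪e₂, v i⟫ = 0)
    (x y : H) (hxx : ⟪x, x⟫ = 1) (hyy : ⟪y, y⟫ = 1) (hxy : ⟪x, y⟫ = 0)
    (hxv : ∀ i, ⟪x, v i⟫ = 0) (hyv : ∀ i, ⟪y, v i⟫ = 0)
    (p1x p2x p1y p2y : ℝ)
    (h1x : ⟪e₁, x⟫ = (p1x : ℂ)) (h2x : ⟪e₂, x⟫ = (p2x : ℂ))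
    (h1y : ⟪e₁, y⟫ = (p1y : ℂ)) (h2y : ⟪e₂, y⟫ = (p2y : ℂ)) (θ : ℝ) :
    c ⟨0, Nat.zero_lt_of_lt hk2⟩ * (a * (Real.cos θ * p1x + Real.sin θ * p1y) ^ 2 +
        b * (Real.cos θ * p2x + Real.sin θ * p2y) ^ 2) +
      c ⟨k - 1, Nat.sub_lt (Nat.zero_lt_of_lt hk2) Nat.one_pos⟩ * (a * (-Real.sin θ * p1x + Real.cos θ * p1y) ^ 2 +
        b * (-Real.sin θ * p2x + Real.cos θ * p2y) ^ 2) ∈ rset k c a b e₁ e₂ := by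
  have hyx : ⟪y, x⟫ = 0 := inner_eq_zero_symm.mp hxy
  set f : H := ((Real.cos θ : ℝ) : ℂ) • x + ((Real.sin θ : ℝ) : ℂ) • y with hf
  set g : H := ((-Real.sin θ : ℝ) : ℂ) • x + ((Real.cos θ : ℝ) : ℂ) • y with hg
  have hff : ⟪f, f⟫ = 1 := by
    simp only [hf, inner_add_left, inner_add_right, inner_smul_left, inner_smul_right,
      hxx, hyy, hxy, hyx, Complex.conj_ofReal, mul_zero, mul_one, add_zero, zero_add]
    norm_cast
    nlinarith [Real.sin_sq_add_cos_sq θ]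
  have hgg : ⟪g, g⟫ = 1 := by
    simp only [hg, inner_add_left, inner_add_right, inner_smul_left, inner_smul_right,
      hxx, hyy, hxy, hyx, Complex.conj_ofReal, mul_zero, mul_one, add_zero, zero_add]
    norm_cast
    nlinarith [Real.sin_sq_add_cos_sq θ]
  have hfg : ⟪f, g⟫ = 0 := by
    simp only [hf, hg, inner_add_left, inner_add_right, inner_smul_left, inner_smul_right,
      hxx, hyy, hxy, hyx, Complex.conj_ofReal, mul_zero, mul_one, add_zero, zero_add]
    norm_cast
    ring
  have hfv : ∀ i, ⟪f, v i⟫ = 0 := fun i => by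
    simp [hf, inner_add_left, inner_smul_left, hxv i, hyv i]
  have hgv : ∀ i, ⟪g, v i⟫ = 0 := fun i => by
    simp [hg, inner_add_left, inner_smul_left, hxv i, hyv i]
  have h := pair_mem hk2 c a b e₁ e₂ v hv hv1 hv2 f g hff hgg hfg hfv hgv
  have A1 : ⟪e₁, f⟫ = ((Real.cos θ * p1x + Real.sin θ * p1y : ℝ) : ℂ) := by
    simp [hf, inner_add_right, inner_smul_right, h1x, h1y]
  have A2 : ⟪e₂, f⟫ = ((Real.cos θ * p2x + Real.sin θ * p2y : ℝ) : ℂ) := by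
    simp [hf, inner_add_right, inner_smul_right, h2x, h2y]
  have A3 : ⟪e₁, g⟫ = ((-Real.sin θ * p1x + Real.cos θ * p1y : ℝ) : ℂ) := by
    simp [hg, inner_add_right, inner_smul_right, h1x, h1y]
  have A4 : ⟪e₂, g⟫ = ((-Real.sin θ * p2x + Real.cos θ * p2y : ℝ) : ℂ) := by
    simp [hg, inner_add_right, inner_smul_right, h2x, h2y]
  rwa [A1, A2, A3, A4, norm_ofReal_sq, norm_ofReal_sq, norm_ofReal_sq, norm_ofReal_sq] at h

theorem cf_mem {H : Type*} [NormedAddCommGroup H] [InnerProductSpace ℂ H]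
    {k : ℕ} (hk2 : 2 ≤ k) (c : Fin k → ℝ) (a b : ℝ) (e₁ e₂ : H)
    (v : Fin (k - 2) → H) (hv : Orthonormal ℂ v)
    (hv1 : ∀ i, ⟪e₁, v i⟫ = 0) (hv2 : ∀ i, ⟪e₂, v i⟫ = 0)
    (x y z : H) (hxx : ⟪x, x⟫ = 1) (hyy : ⟪y, y⟫ = 1) (hzz : ⟪z, z⟫ = 1)
    (hxy : ⟪x, y⟫ = 0) (hxz : ⟪x, z⟫ = 0) (hyz : ⟪y, z⟫ = 0)
    (hxv : ∀ i, ⟪x, v i⟫ = 0) (hyv : ∀ i, ⟪y, v i⟫ = 0) (hzv : ∀ i, ⟪z, v i⟫ = 0)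
    (p1x p2x p1y p2y p1z p2z : ℝ)
    (h1x : ⟪e₁, x⟫ = (p1x : ℂ)) (h2x : ⟪e₂, x⟫ = (p2x : ℂ))
    (h1y : ⟪e₁, y⟫ = (p1y : ℂ)) (h2y : ⟪e₂, y⟫ = (p2y : ℂ))
    (h1z : ⟪e₁, z⟫ = (p1z : ℂ)) (h2z : ⟪e₂, z⟫ = (p2z : ℂ)) (θ : ℝ) :
    c ⟨0, Nat.zero_lt_of_lt hk2⟩ * (a * (Real.cos θ * p1x + Real.sin θ * p1y) ^ 2 +
        b * (Real.cos θ * p2x + Real.sin θ * p2y) ^ 2) +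
      c ⟨k - 1, Nat.sub_lt (Nat.zero_lt_of_lt hk2) Nat.one_pos⟩ * (a * p1z ^ 2 + b * p2z ^ 2) ∈ rset k c a b e₁ e₂ := by
  have hyx : ⟪y, x⟫ = 0 := inner_eq_zero_symm.mp hxy
  set f : H := ((Real.cos θ : ℝ) : ℂ) • x + ((Real.sin θ : ℝ) : ℂ) • y with hf
  have hff : ⟪f, f⟫ = 1 := by
    simp only [hf, inner_add_left, inner_add_right, inner_smul_left, inner_smul_right,
      hxx, hyy, hxy, hyx, Complex.conj_ofReal, mul_zero, mul_one, add_zero, zero_add]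
    norm_cast
    nlinarith [Real.sin_sq_add_cos_sq θ]
  have hfg : ⟪f, z⟫ = 0 := by
    simp [hf, inner_add_left, inner_smul_left, hxz, hyz]
  have hfv : ∀ i, ⟪f, v i⟫ = 0 := fun i => by
    simp [hf, inner_add_left, inner_smul_left, hxv i, hyv i]
  have h := pair_mem hk2 c a b e₁ e₂ v hv hv1 hv2 f z hff hzz hfg hfv hzv
  have A1 : ⟪e₁, f⟫ = ((Real.cos θ * p1x + Real.sin θ * p1y : ℝ) : ℂ) := by
    simp [hf, inner_add_right, inner_smul_right, h1x, h1y]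
  have A2 : ⟪e₂, f⟫ = ((Real.cos θ * p2x + Real.sin θ * p2y : ℝ) : ℂ) := by
    simp [hf, inner_add_right, inner_smul_right, h2x, h2y]
  rwa [A1, A2, h1z, h2z, norm_ofReal_sq, norm_ofReal_sq, norm_ofReal_sq, norm_ofReal_sq] at h

theorem cs_mem {H : Type*} [NormedAddCommGroup H] [InnerProductSpace ℂ H]
    {k : ℕ} (hk2 : 2 ≤ k) (c : Fin k → ℝ) (a b : ℝ) (e₁ e₂ : H)
    (v : Fin (k - 2) → H) (hv : Orthonormal ℂ v)
    (hv1 : ∀ i, ⟪e₁, v i⟫ = 0) (hv2 : ∀ i, ⟪e₂, v i⟫ = 0)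
    (x y z : H) (hxx : ⟪x, x⟫ = 1) (hyy : ⟪y, y⟫ = 1) (hzz : ⟪z, z⟫ = 1)
    (hxy : ⟪x, y⟫ = 0) (hxz : ⟪x, z⟫ = 0) (hyz : ⟪y, z⟫ = 0)
    (hxv : ∀ i, ⟪x, v i⟫ = 0) (hyv : ∀ i, ⟪y, v i⟫ = 0) (hzv : ∀ i, ⟪z, v i⟫ = 0)
    (p1x p2x p1y p2y p1z p2z : ℝ)
    (h1x : ⟪e₁, x⟫ = (p1x : ℂ)) (h2x : ⟪e₂, x⟫ = (p2x : ℂ))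
    (h1y : ⟪e₁, y⟫ = (p1y : ℂ)) (h2y : ⟪e₂, y⟫ = (p2y : ℂ))
    (h1z : ⟪e₁, z⟫ = (p1z : ℂ)) (h2z : ⟪e₂, z⟫ = (p2z : ℂ)) (θ : ℝ) :
    c ⟨0, Nat.zero_lt_of_lt hk2⟩ * (a * p1z ^ 2 + b * p2z ^ 2) +
      c ⟨k - 1, Nat.sub_lt (Nat.zero_lt_of_lt hk2) Nat.one_pos⟩ * (a * (Real.cos θ * p1x + Real.sin θ * p1y) ^ 2 +
        b * (Real.cos θ * p2x + Real.sin θ * p2y) ^ 2) ∈ rset k c a b e₁ e₂ := by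
  have hyx : ⟪y, x⟫ = 0 := inner_eq_zero_symm.mp hxy
  set f : H := ((Real.cos θ : ℝ) : ℂ) • x + ((Real.sin θ : ℝ) : ℂ) • y with hf
  have hff : ⟪f, f⟫ = 1 := by
    simp only [hf, inner_add_left, inner_add_right, inner_smul_left, inner_smul_right,
      hxx, hyy, hxy, hyx, Complex.conj_ofReal, mul_zero, mul_one, add_zero, zero_add]
    norm_cast
    nlinarith [Real.sin_sq_add_cos_sq θ]
  have hgf : ⟪z, f⟫ = 0 := by
    simp [hf, inner_add_right, inner_smul_right,
      inner_eq_zero_symm.mp hxz, inner_eq_zero_symm.mp hyz]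
  have hfv : ∀ i, ⟪f, v i⟫ = 0 := fun i => by
    simp [hf, inner_add_left, inner_smul_left, hxv i, hyv i]
  have h := pair_mem hk2 c a b e₁ e₂ v hv hv1 hv2 z f hzz hff hgf hzv hfv
  have A1 : ⟪e₁, f⟫ = ((Real.cos θ * p1x + Real.sin θ * p1y : ℝ) : ℂ) := by
    simp [hf, inner_add_right, inner_smul_right, h1x, h1y]
  have A2 : ⟪e₂, f⟫ = ((Real.cos θ * p2x + Real.sin θ * p2y : ℝ) : ℂ) := by
    simp [hf, inner_add_right, inner_smul_right, h2x, h2y]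
  rwa [A1, A2, h1z, h2z, norm_ofReal_sq, norm_ofReal_sq, norm_ofReal_sq, norm_ofReal_sq] at h

theorem stmt15 {H : Type*} [NormedAddCommGroup H] [InnerProductSpace ℂ H]
    (k : ℕ) (hk2 : 2 ≤ k) (hk : (k : Cardinal) ≤ Module.rank ℂ H)
    (c : Fin k → ℝ) (hc : Antitone c)
    (a b : ℝ) (ha : 0 < a) (hb : b < 0)
    (e₁ e₂ : H) (he : Orthonormal ℂ ![e₁, e₂]) :
    cNumRange k c ((a : ℂ) • ((innerSL ℂ e₁).smulRight e₁) +
        (b : ℂ) • ((innerSL ℂ e₂).smulRight e₂)) =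
      Complex.ofReal '' Set.Icc
        (ctil (Module.rank ℂ H) k c ⟨k - 1, by omega⟩ * a +
          cbar (Module.rank ℂ H) k c ⟨0, by omega⟩ * b)
        (cbar (Module.rank ℂ H) k c ⟨0, by omega⟩ * a +
          ctil (Module.rank ℂ H) k c ⟨k - 1, by omega⟩ * b) := by

  rw [cNumRange_eq_image]
  apply congrArg (Set.image Complex.ofReal)
  have hite2 := orthonormal_iff_ite.mp he
  have i11 : ⟪e₁, e₁⟫ = 1 := by simpa using hite2 0 0
  have i22 : ⟪e₂, e₂⟫ = 1 := by simpa using hite2 1 1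
  have i12 : ⟪e₁, e₂⟫ = 0 := by simpa using hite2 0 1
  have i21 : ⟪e₂, e₁⟫ = 0 := by simpa using hite2 1 0
  have hn1 : ‖e₁‖ = 1 := by simpa using he.1 0
  have hn2 : ‖e₂‖ = 1 := by simpa using he.1 1
  simp only [cbar, ctil]
  apply Set.Subset.antisymm
  · rintro r hr
    obtain ⟨e, he', rfl⟩ := hr
    have hs0 : ∀ j : Fin k, (0:ℝ) ≤ ‖⟪e₁, e j⟫‖ ^ 2 := fun j => sq_nonneg _
    have ht0 : ∀ j : Fin k, (0:ℝ) ≤ ‖⟪e₂, e j⟫‖ ^ 2 := fun j => sq_nonneg _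
    have h1 : ∑ j, ‖⟪e₁, e j⟫‖ ^ 2 ≤ 1 := by
      have := bessel' he' e₁; rwa [hn1, one_pow] at this
    have h2 : ∑ j, ‖⟪e₂, e j⟫‖ ^ 2 ≤ 1 := by
      have := bessel' he' e₂; rwa [hn2, one_pow] at this
    have hd1 : Module.rank ℂ H = (k : Cardinal) → ∑ j, ‖⟪e₁, e j⟫‖ ^ 2 = 1 := fun h => by
      have := parseval' (by omega) h he' e₁; rwa [hn1, one_pow] at this
    have hd2 : Module.rank ℂ H = (k : Cardinal) → ∑ j, ‖⟪e₂, e j⟫‖ ^ 2 = 1 := fun h => by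
      have := parseval' (by omega) h he' e₂; rwa [hn2, one_pow] at this
    have hSu := sum_le_cbar' (by omega) c _ hc hs0 h1 _ hd1
    have hSl := ctil_le_sum' (by omega) c _ hc hs0 h1 _ hd1
    have hTu := sum_le_cbar' (by omega) c _ hc ht0 h2 _ hd2
    have hTl := ctil_le_sum' (by omega) c _ hc ht0 h2 _ hd2
    have hsplit : ∑ j, c j * (a * ‖⟪e₁, e j⟫‖ ^ 2 + b * ‖⟪e₂, e j⟫‖ ^ 2)
        = a * (∑ j, c j * ‖⟪e₁, e j⟫‖ ^ 2) + b * (∑ j, c j * ‖⟪e₂, e j⟫‖ ^ 2) := by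
      rw [Finset.mul_sum, Finset.mul_sum, ← Finset.sum_add_distrib]
      exact Finset.sum_congr rfl fun j _ => by ring
    rw [Set.mem_Icc, hsplit]
    constructor
    · refine add_le_add ?_ ?_
      · exact le_trans (le_of_eq (mul_comm _ _)) (mul_le_mul_of_nonneg_left hSl ha.le)
      · exact le_trans (le_of_eq (mul_comm _ _)) (mul_le_mul_of_nonpos_left hTu hb.le)
    · refine add_le_add ?_ ?_
      · exact le_trans (mul_le_mul_of_nonneg_left hSu ha.le) (le_of_eq (mul_comm _ _))
      · exact le_trans (mul_le_mul_of_nonpos_left hTl hb.le) (le_of_eq (mul_comm _ _))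
  · -- Icc ⊆ rset
    rcases eq_or_lt_of_le hk with heq | hlt
    · -- rank = k
      have hrk : Module.rank ℂ H = (k : Cardinal) := heq.symm
      rw [if_pos hrk, if_pos hrk]
      obtain ⟨W, hW, hWe⟩ := ext' k hk 2 ![e₁, e₂] he hk2
      have hWite := orthonormal_iff_ite.mp hW
      have hWone : ∀ p : Fin k, ⟪W p, W p⟫ = 1 := fun p => by rw [hWite p p, if_pos rfl]
      have hWne : ∀ p q : Fin k, (p : ℕ) ≠ (q : ℕ) → ⟪W p, W q⟫ = 0 := fun p q hpq => by
        rw [hWite p q, if_neg (fun hh => hpq (congrArg Fin.val hh))]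
      have hW0 : W ⟨0, by omega⟩ = e₁ := by
        have := hWe 0 (by omega) (by omega); simpa using this
      have hW1 : W ⟨1, by omega⟩ = e₂ := by
        have := hWe 1 (by omega) (by omega); simpa using this
      set v : Fin (k - 2) → H :=
        W ∘ (fun i : Fin (k - 2) => (⟨(i : ℕ) + 2, by omega⟩ : Fin k)) with hvdef
      have hv : Orthonormal ℂ v := hW.comp _ (fun i j hij => by
        have := congrArg Fin.val hij
        exact Fin.ext (by simpa using this))
      have hv1 : ∀ i, ⟪e₁, v i⟫ = 0 := fun i => by
        rw [← hW0]
        exact hWne ⟨0, by omega⟩ ⟨(i : ℕ) + 2, by omega⟩ (by show 0 ≠ (i : ℕ) + 2; omega)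
      have hv2 : ∀ i, ⟪e₂, v i⟫ = 0 := fun i => by
        rw [← hW1]
        exact hWne ⟨1, by omega⟩ ⟨(i : ℕ) + 2, by omega⟩ (by show 1 ≠ (i : ℕ) + 2; omega)
      have hA : ∀ θ : ℝ,
          c ⟨0, by omega⟩ * (a * (Real.cos θ * 1 + Real.sin θ * 0) ^ 2 +
              b * (Real.cos θ * 0 + Real.sin θ * 1) ^ 2) +
            c ⟨k - 1, by omega⟩ * (a * (-Real.sin θ * 1 + Real.cos θ * 0) ^ 2 +
              b * (-Real.sin θ * 0 + Real.cos θ * 1) ^ 2) ∈ rset k c a b e₁ e₂ :=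
        fun θ => rot_mem hk2 c a b e₁ e₂ v hv hv1 hv2 e₁ e₂ i11 i22 i12 hv1 hv2
          1 0 0 1 (by rw [i11]; norm_num) (by rw [i21]; norm_num)
          (by rw [i12]; norm_num) (by rw [i22]; norm_num) θ
      have hcont : Continuous (fun θ : ℝ =>
          c ⟨0, by omega⟩ * (a * (Real.cos θ * 1 + Real.sin θ * 0) ^ 2 +
              b * (Real.cos θ * 0 + Real.sin θ * 1) ^ 2) +
            c ⟨k - 1, by omega⟩ * (a * (-Real.sin θ * 1 + Real.cos θ * 0) ^ 2 +
              b * (-Real.sin θ * 0 + Real.cos θ * 1) ^ 2)) := by fun_prop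
      intro r hr
      have hIVT := intermediate_value_uIcc (a := (0:ℝ)) (b := Real.pi / 2) hcont.continuousOn
      have hr2 : r ∈ Set.uIcc
          (c ⟨0, by omega⟩ * (a * (Real.cos 0 * 1 + Real.sin 0 * 0) ^ 2 +
              b * (Real.cos 0 * 0 + Real.sin 0 * 1) ^ 2) +
            c ⟨k - 1, by omega⟩ * (a * (-Real.sin 0 * 1 + Real.cos 0 * 0) ^ 2 +
              b * (-Real.sin 0 * 0 + Real.cos 0 * 1) ^ 2))
          (c ⟨0, by omega⟩ * (a * (Real.cos (Real.pi/2) * 1 + Real.sin (Real.pi/2) * 0) ^ 2 +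
              b * (Real.cos (Real.pi/2) * 0 + Real.sin (Real.pi/2) * 1) ^ 2) +
            c ⟨k - 1, by omega⟩ * (a * (-Real.sin (Real.pi/2) * 1 + Real.cos (Real.pi/2) * 0) ^ 2 +
              b * (-Real.sin (Real.pi/2) * 0 + Real.cos (Real.pi/2) * 1) ^ 2)) := by
        rw [show (c ⟨0, by omega⟩ * (a * (Real.cos 0 * 1 + Real.sin 0 * 0) ^ 2 +
              b * (Real.cos 0 * 0 + Real.sin 0 * 1) ^ 2) +
            c ⟨k - 1, by omega⟩ * (a * (-Real.sin 0 * 1 + Real.cos 0 * 0) ^ 2 +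
              b * (-Real.sin 0 * 0 + Real.cos 0 * 1) ^ 2)) =
            c ⟨0, by omega⟩ * a + c ⟨k - 1, by omega⟩ * b by
          simp; try ring]
        rw [show (c ⟨0, by omega⟩ * (a * (Real.cos (Real.pi/2) * 1 + Real.sin (Real.pi/2) * 0) ^ 2 +
              b * (Real.cos (Real.pi/2) * 0 + Real.sin (Real.pi/2) * 1) ^ 2) +
            c ⟨k - 1, by omega⟩ * (a * (-Real.sin (Real.pi/2) * 1 + Real.cos (Real.pi/2) * 0) ^ 2 +
              b * (-Real.sin (Real.pi/2) * 0 + Real.cos (Real.pi/2) * 1) ^ 2)) =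
            c ⟨k - 1, by omega⟩ * a + c ⟨0, by omega⟩ * b by
          simp [Real.cos_pi_div_two, Real.sin_pi_div_two]; try ring]
        exact Set.Icc_subset_uIcc' hr
      obtain ⟨θ, _, hθ⟩ := hIVT hr2
      exact hθ ▸ hA θ
    · -- rank > k
      have hrk : Module.rank ℂ H ≠ (k : Cardinal) := fun h => by
        rw [h] at hlt; exact lt_irrefl _ hlt
      rw [if_neg hrk, if_neg hrk]
      have hk1 : ((k + 1 : ℕ) : Cardinal) ≤ Module.rank ℂ H := by
        rw [Cardinal.nat_succ]
        exact Order.succ_le_of_lt hlt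
      obtain ⟨W, hW, hWe⟩ := ext' (k + 1) hk1 2 ![e₁, e₂] he (by omega)
      have hWite := orthonormal_iff_ite.mp hW
      have hWone : ∀ p : Fin (k + 1), ⟪W p, W p⟫ = 1 := fun p => by
        rw [hWite p p, if_pos rfl]
      have hWne : ∀ p q : Fin (k + 1), (p : ℕ) ≠ (q : ℕ) → ⟪W p, W q⟫ = 0 := fun p q hpq => by
        rw [hWite p q, if_neg (fun hh => hpq (congrArg Fin.val hh))]
      have hW0 : W ⟨0, by omega⟩ = e₁ := by
        have := hWe 0 (by omega) (by omega); simpa using this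
      have hW1 : W ⟨1, by omega⟩ = e₂ := by
        have := hWe 1 (by omega) (by omega); simpa using this
      set u : H := W ⟨2, by omega⟩ with hu
      have iuu : ⟪u, u⟫ = 1 := hWone ⟨2, by omega⟩
      have i1u : ⟪e₁, u⟫ = 0 := by
        rw [← hW0]; exact hWne ⟨0, by omega⟩ ⟨2, by omega⟩ (by show 0 ≠ 2; omega)
      have i2u : ⟪e₂, u⟫ = 0 := by
        rw [← hW1]; exact hWne ⟨1, by omega⟩ ⟨2, by omega⟩ (by show 1 ≠ 2; omega)
      have iu1 : ⟪u, e₁⟫ = 0 := inner_eq_zero_symm.mp i1u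
      have iu2 : ⟪u, e₂⟫ = 0 := inner_eq_zero_symm.mp i2u
      set v : Fin (k - 2) → H :=
        W ∘ (fun i : Fin (k - 2) => (⟨(i : ℕ) + 3, by omega⟩ : Fin (k + 1))) with hvdef
      have hv : Orthonormal ℂ v := hW.comp _ (fun i j hij => by
        have := congrArg Fin.val hij
        exact Fin.ext (by simpa using this))
      have hv1 : ∀ i, ⟪e₁, v i⟫ = 0 := fun i => by
        rw [← hW0]
        exact hWne ⟨0, by omega⟩ ⟨(i : ℕ) + 3, by omega⟩ (by show 0 ≠ (i : ℕ) + 3; omega)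
      have hv2 : ∀ i, ⟪e₂, v i⟫ = 0 := fun i => by
        rw [← hW1]
        exact hWne ⟨1, by omega⟩ ⟨(i : ℕ) + 3, by omega⟩ (by show 1 ≠ (i : ℕ) + 3; omega)
      have hvu : ∀ i, ⟪u, v i⟫ = 0 := fun i =>
        hWne ⟨2, by omega⟩ ⟨(i : ℕ) + 3, by omega⟩ (by show 2 ≠ (i : ℕ) + 3; omega)
      have P11 : ⟪e₁, e₁⟫ = ((1 : ℝ) : ℂ) := by rw [i11]; norm_num
      have P21 : ⟪e₂, e₁⟫ = ((0 : ℝ) : ℂ) := by rw [i21]; norm_num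
      have P12 : ⟪e₁, e₂⟫ = ((0 : ℝ) : ℂ) := by rw [i12]; norm_num
      have P22 : ⟪e₂, e₂⟫ = ((1 : ℝ) : ℂ) := by rw [i22]; norm_num
      have P1u : ⟪e₁, u⟫ = ((0 : ℝ) : ℂ) := by rw [i1u]; norm_num
      have P2u : ⟪e₂, u⟫ = ((0 : ℝ) : ℂ) := by rw [i2u]; norm_num
      have mkseg : ∀ φ : ℝ → ℝ, Continuous φ → (∀ θ, φ θ ∈ rset k c a b e₁ e₂) →
          Set.uIcc (φ 0) (φ (Real.pi/2)) ⊆ rset k c a b e₁ e₂ := by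
        intro φ hφ hm r hr
        obtain ⟨θ, _, hθ⟩ :=
          intermediate_value_uIcc (a := (0:ℝ)) (b := Real.pi/2) hφ.continuousOn hr
        exact hθ ▸ hm θ
      set φA : ℝ → ℝ := fun θ =>
        c ⟨0, by omega⟩ * (a * (Real.cos θ * 1 + Real.sin θ * 0) ^ 2 +
            b * (Real.cos θ * 0 + Real.sin θ * 1) ^ 2) +
          c ⟨k - 1, by omega⟩ * (a * (-Real.sin θ * 1 + Real.cos θ * 0) ^ 2 +
            b * (-Real.sin θ * 0 + Real.cos θ * 1) ^ 2) with hφA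
      have SA := mkseg φA (by rw [hφA]; fun_prop)
        (fun θ => rot_mem hk2 c a b e₁ e₂ v hv hv1 hv2 e₁ e₂ i11 i22 i12 hv1 hv2
          1 0 0 1 P11 P21 P12 P22 θ)
      have hA0 : φA 0 = c ⟨0, by omega⟩ * a + c ⟨k - 1, by omega⟩ * b := by
        rw [hφA]; simp; try ring
      have hAp : φA (Real.pi/2) = c ⟨k - 1, by omega⟩ * a + c ⟨0, by omega⟩ * b := by
        rw [hφA]; simp [Real.cos_pi_div_two, Real.sin_pi_div_two]; try ring
      set φB : ℝ → ℝ := fun θ =>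
        c ⟨0, by omega⟩ * (a * (1:ℝ) ^ 2 + b * (0:ℝ) ^ 2) +
          c ⟨k - 1, by omega⟩ * (a * (Real.cos θ * 0 + Real.sin θ * 0) ^ 2 +
            b * (Real.cos θ * 1 + Real.sin θ * 0) ^ 2) with hφB
      have SB := mkseg φB (by rw [hφB]; fun_prop)
        (fun θ => cs_mem hk2 c a b e₁ e₂ v hv hv1 hv2 e₂ u e₁ i22 iuu i11 i2u i21 iu1
          hv2 hvu hv1 0 1 0 0 1 0 P12 P22 P1u P2u P11 P21 θ)
      have hB0 : φB 0 = c ⟨0, by omega⟩ * a + c ⟨k - 1, by omega⟩ * b := by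
        rw [hφB]; simp; try ring
      have hBp : φB (Real.pi/2) = c ⟨0, by omega⟩ * a := by
        rw [hφB]; simp [Real.cos_pi_div_two, Real.sin_pi_div_two]; try ring
      set φC : ℝ → ℝ := fun θ =>
        c ⟨0, by omega⟩ * (a * (Real.cos θ * 1 + Real.sin θ * 0) ^ 2 +
            b * (Real.cos θ * 0 + Real.sin θ * 0) ^ 2) +
          c ⟨k - 1, by omega⟩ * (a * (0:ℝ) ^ 2 + b * (1:ℝ) ^ 2) with hφC
      have SC := mkseg φC (by rw [hφC]; fun_prop)
        (fun θ => cf_mem hk2 c a b e₁ e₂ v hv hv1 hv2 e₁ u e₂ i11 iuu i22 i1u i12 iu2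
          hv1 hvu hv2 1 0 0 0 0 1 P11 P21 P1u P2u P12 P22 θ)
      have hC0 : φC 0 = c ⟨0, by omega⟩ * a + c ⟨k - 1, by omega⟩ * b := by
        rw [hφC]; simp; try ring
      have hCp : φC (Real.pi/2) = c ⟨k - 1, by omega⟩ * b := by
        rw [hφC]; simp [Real.cos_pi_div_two, Real.sin_pi_div_two]; try ring
      set φE : ℝ → ℝ := fun θ =>
        c ⟨0, by omega⟩ * (a * (0:ℝ) ^ 2 + b * (1:ℝ) ^ 2) +
          c ⟨k - 1, by omega⟩ * (a * (Real.cos θ * 1 + Real.sin θ * 0) ^ 2 +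
            b * (Real.cos θ * 0 + Real.sin θ * 0) ^ 2) with hφE
      have SE := mkseg φE (by rw [hφE]; fun_prop)
        (fun θ => cs_mem hk2 c a b e₁ e₂ v hv hv1 hv2 e₁ u e₂ i11 iuu i22 i1u i12 iu2
          hv1 hvu hv2 1 0 0 0 0 1 P11 P21 P1u P2u P12 P22 θ)
      have hE0 : φE 0 = c ⟨k - 1, by omega⟩ * a + c ⟨0, by omega⟩ * b := by
        rw [hφE]; simp; try ring
      have hEp : φE (Real.pi/2) = c ⟨0, by omega⟩ * b := by
        rw [hφE]; simp [Real.cos_pi_div_two, Real.sin_pi_div_two]; try ring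
      set φF : ℝ → ℝ := fun θ =>
        c ⟨0, by omega⟩ * (a * (Real.cos θ * 0 + Real.sin θ * 0) ^ 2 +
            b * (Real.cos θ * 1 + Real.sin θ * 0) ^ 2) +
          c ⟨k - 1, by omega⟩ * (a * (1:ℝ) ^ 2 + b * (0:ℝ) ^ 2) with hφF
      have SF := mkseg φF (by rw [hφF]; fun_prop)
        (fun θ => cf_mem hk2 c a b e₁ e₂ v hv hv1 hv2 e₂ u e₁ i22 iuu i11 i2u i21 iu1
          hv2 hvu hv1 0 1 0 0 1 0 P12 P22 P1u P2u P11 P21 θ)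
      have hF0 : φF 0 = c ⟨k - 1, by omega⟩ * a + c ⟨0, by omega⟩ * b := by
        rw [hφF]; simp; try ring
      have hFp : φF (Real.pi/2) = c ⟨k - 1, by omega⟩ * a := by
        rw [hφF]; simp [Real.cos_pi_div_two, Real.sin_pi_div_two]; try ring
      intro r hr
      rcases le_or_gt (c ⟨k - 1, by omega⟩) 0 with hck | hck
      · rcases le_or_gt (0:ℝ) (c ⟨0, by omega⟩) with hc0 | hc0
        · -- mixed signs
          rw [min_eq_left hck, max_eq_left hc0] at hr
          exact SA (by rw [hA0, hAp, Set.uIcc_comm]; exact Set.Icc_subset_uIcc hr)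
        · -- c0 < 0
          rw [min_eq_left hck, max_eq_right hc0.le] at hr
          rw [zero_mul, add_zero, zero_mul, zero_add] at hr
          have h1 := Set.Icc_subset_uIcc hr
          rcases Set.uIcc_subset_uIcc_union_uIcc
              (b := c ⟨k - 1, by omega⟩ * a + c ⟨0, by omega⟩ * b) h1 with h2 | h2
          · exact SF (by rw [hF0, hFp, Set.uIcc_comm]; exact h2)
          · rcases Set.uIcc_subset_uIcc_union_uIcc
                (b := c ⟨0, by omega⟩ * a + c ⟨k - 1, by omega⟩ * b) h2 with h3 | h3
            · exact SA (by rw [hA0, hAp, Set.uIcc_comm]; exact h3)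
            · exact SC (by rw [hC0, hCp]; exact h3)
      · -- 0 < cK
        have hc0 : (0:ℝ) < c ⟨0, by omega⟩ :=
          lt_of_lt_of_le hck (hc (by simp [Fin.le_def]))
        rw [min_eq_right hck.le, max_eq_left hc0.le] at hr
        rw [zero_mul, zero_add, zero_mul, add_zero] at hr
        have h1 := Set.Icc_subset_uIcc hr
        rcases Set.uIcc_subset_uIcc_union_uIcc
            (b := c ⟨k - 1, by omega⟩ * a + c ⟨0, by omega⟩ * b) h1 with h2 | h2
        · exact SE (by rw [hE0, hEp, Set.uIcc_comm]; exact h2)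
        · rcases Set.uIcc_subset_uIcc_union_uIcc
              (b := c ⟨0, by omega⟩ * a + c ⟨k - 1, by omega⟩ * b) h2 with h3 | h3
          · exact SA (by rw [hA0, hAp, Set.uIcc_comm]; exact h3)
          · exact SB (by rw [hB0, hBp]; exact h3)
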